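/- arXiv:1105.0741 — 3 statements merged into one kernel-verified Lean document; each statement's English description precedes it below -/
import Mathlib

section
/- Let K ⊂ ℝˡ be compact with nonempty interior, m an interior point of K, and α : K → ℝ continuous with α(m) ≤ α(p) for all p, satisfying α(m) + C₁‖p−m‖² ≤ α(p) ≤ α(m) + C₂‖p−m‖² for constants C₁, C₂ > 0. Then for the normalized densities ρ_s(p) = e^{−s α(p)} / ∫_K e^{−s α(q)} dq, for every open neighborhood B of m in K, the mass outside B tends to zero: lim_{s→∞} ∫_{K∖B} ρ_s(p) dp = 0. -/
/-!
On the part of `K` outside `B` the quadratic lower bound gives `α ≥ α m + C₁ ε²`, where `ε` is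
the radius of a ball around `m` inside the open set cutting out `B`. By continuity, on a small
ball around `m` (inside `K`) `α ≤ α m + C₁ ε² / 2`. Hence the numerator is at most
`vol K · e^{-s (α m + C₁ ε²)}` and the denominator at least `vol ball · e^{-s (α m + C₁ ε² / 2)}`,
so the ratio is `O(e^{-s C₁ ε² / 2})`.
-/

open MeasureTheory Filter Topology

section LaplaceConcentration

variable {X : Type*} [MeasurableSpace X] {μ : Measure X} {f : X → ℝ} {s a b : ℝ}

theorem setIntegral_exp_neg_mul_le {A : Set X} (hμA : μ A ≠ ⊤) (hs : 0 ≤ s)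
    (hf : ∀ x ∈ A, a ≤ f x) :
    ∫ x in A, Real.exp (-s * f x) ∂μ ≤ Real.exp (-s * a) * μ.real A := by
  refine (Real.le_norm_self _).trans (norm_setIntegral_le_of_norm_le_const hμA.lt_top ?_)
  intro x hx
  rw [Real.norm_of_nonneg (Real.exp_pos _).le, Real.exp_le_exp]
  nlinarith [hf x hx]

theorem exp_neg_mul_mul_le_setIntegral {U K : Set X} (hU : MeasurableSet U) (hμU : μ U ≠ ⊤)
    (hUK : U ⊆ K) (hint : IntegrableOn (fun x => Real.exp (-s * f x)) K μ) (hs : 0 ≤ s)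
    (hf : ∀ x ∈ U, f x ≤ b) :
    Real.exp (-s * b) * μ.real U ≤ ∫ x in K, Real.exp (-s * f x) ∂μ := by
  calc Real.exp (-s * b) * μ.real U ≤ ∫ x in U, Real.exp (-s * f x) ∂μ := by
        refine setIntegral_ge_of_const_le_real hU hμU (fun x hx => ?_) (hint.mono_set hUK)
        rw [Real.exp_le_exp]
        nlinarith [hf x hx]
    _ ≤ ∫ x in K, Real.exp (-s * f x) ∂μ :=
        setIntegral_mono_set hint (Eventually.of_forall fun _ => (Real.exp_pos _).le)
          hUK.eventuallyLE

theorem tendsto_setIntegral_exp_neg_mul_div_setIntegral {A U K : Set X} (hμA : μ A ≠ ⊤)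
    (hU : MeasurableSet U) (hμU₀ : μ U ≠ 0) (hμU : μ U ≠ ⊤) (hUK : U ⊆ K)
    (hint : ∀ s : ℝ, IntegrableOn (fun x => Real.exp (-s * f x)) K μ)
    (hfA : ∀ x ∈ A, a ≤ f x) (hfU : ∀ x ∈ U, f x ≤ b) (hba : b < a) :
    Tendsto (fun s : ℝ => (∫ x in A, Real.exp (-s * f x) ∂μ) / ∫ x in K, Real.exp (-s * f x) ∂μ)
      atTop (𝓝 0) := by
  have hμU_pos : 0 < μ.real U := ENNReal.toReal_pos hμU₀ hμU
  have hbound : Tendsto (fun s : ℝ => μ.real A / μ.real U * Real.exp (-(s * (a - b))))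
      atTop (𝓝 0) := by
    simpa using tendsto_const_nhds.mul
      (Real.tendsto_exp_neg_atTop_nhds_zero.comp (tendsto_id.atTop_mul_const (sub_pos.2 hba)))
  refine squeeze_zero' (Eventually.of_forall fun s => div_nonneg
    (integral_nonneg fun _ => (Real.exp_pos _).le)
    (integral_nonneg fun _ => (Real.exp_pos _).le)) ?_ hbound
  filter_upwards [eventually_ge_atTop 0] with s hs
  calc (∫ x in A, Real.exp (-s * f x) ∂μ) / ∫ x in K, Real.exp (-s * f x) ∂μ
      ≤ Real.exp (-s * a) * μ.real A / (Real.exp (-s * b) * μ.real U) :=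
        div_le_div₀ (by positivity) (setIntegral_exp_neg_mul_le hμA hs hfA) (by positivity)
          (exp_neg_mul_mul_le_setIntegral hU hμU hUK (hint s) hs hfU)
    _ = μ.real A / μ.real U * Real.exp (-(s * (a - b))) := by
        rw [mul_comm (Real.exp _), mul_comm (Real.exp _), mul_div_mul_comm, ← Real.exp_sub]
        ring_nf

end LaplaceConcentration

theorem stmt5_general (l : ℕ) (K : Set (EuclideanSpace ℝ (Fin l))) (hK : IsCompact K)
    (m : EuclideanSpace ℝ (Fin l)) (hm : m ∈ interior K)
    (α : EuclideanSpace ℝ (Fin l) → ℝ) (hα : ContinuousOn α K)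
    (C₁ C₂ : ℝ) (hC₁ : 0 < C₁)
    (hbound : ∀ p ∈ K, α m + C₁ * ‖p - m‖ ^ 2 ≤ α p ∧ α p ≤ α m + C₂ * ‖p - m‖ ^ 2) :
    ∀ B : Set (EuclideanSpace ℝ (Fin l)), m ∈ B → (∃ O, IsOpen O ∧ B = K ∩ O) →
      Tendsto
        (fun s : ℝ => (∫ p in K \ B, Real.exp (-s * α p)) / ∫ p in K, Real.exp (-s * α p))
        atTop (nhds 0) := by
  rintro B hmB ⟨O, hO, rfl⟩
  obtain ⟨ε, hε, hballO⟩ := Metric.isOpen_iff.mp hO m hmB.2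
  have hgap : 0 < C₁ * ε ^ 2 := by positivity
  have hKm : ∀ᶠ p in 𝓝 m, p ∈ K := mem_interior_iff_mem_nhds.mp hm
  have hnear : ∀ᶠ p in 𝓝 m, p ∈ K ∧ α p ≤ α m + C₁ * ε ^ 2 / 2 :=
    hKm.and <| (hα.continuousAt hKm).eventually (eventually_le_nhds (by linarith))
  obtain ⟨δ, hδ, hballδ⟩ := Metric.mem_nhds_iff.mp hnear
  have hfar : ∀ p ∈ K \ (K ∩ O), α m + C₁ * ε ^ 2 ≤ α p := by
    rintro p ⟨hpK, hpB⟩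
    have hεp : ε ≤ ‖p - m‖ := by
      rw [← dist_eq_norm]
      exact not_lt.mp fun h => hpB ⟨hpK, hballO h⟩
    nlinarith [(hbound p hpK).1, mul_le_mul hεp hεp hε.le (norm_nonneg _)]
  have hint : ∀ s : ℝ, IntegrableOn (fun p => Real.exp (-s * α p)) K := fun s =>
    (Real.continuous_exp.comp_continuousOn (continuousOn_const.mul hα)).integrableOn_compact hK
  exact tendsto_setIntegral_exp_neg_mul_div_setIntegral
    ((measure_mono Set.sdiff_subset).trans_lt hK.measure_lt_top).ne
    Metric.isOpen_ball.measurableSet (Metric.measure_ball_pos volume m hδ).ne'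
    measure_ball_lt_top.ne (fun p hp => (hballδ hp).1)
    hint hfar (fun p hp => (hballδ hp).2) (by linarith)

/-- Concentration: for `α` continuous on a compact `K ⊂ ℝˡ` with minimum at the
interior point `m` and quadratic bounds `α(m) + C₁‖p-m‖² ≤ α(p) ≤ α(m) + C₂‖p-m‖²`,
the normalized densities `ρ_s = e^{-sα}/∫_K e^{-sα}` have mass outside any relatively
open neighborhood `B` of `m` tending to `0` as `s → ∞`. -/
theorem stmt5 (l : ℕ) (K : Set (EuclideanSpace ℝ (Fin l))) (hK : IsCompact K)
    (m : EuclideanSpace ℝ (Fin l)) (hm : m ∈ interior K)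
    (α : EuclideanSpace ℝ (Fin l) → ℝ) (hα : ContinuousOn α K)
    (C₁ C₂ : ℝ) (hC₁ : 0 < C₁) (hC₂ : 0 < C₂)
    (hmin : ∀ p ∈ K, α m ≤ α p)
    (hbound : ∀ p ∈ K, α m + C₁ * ‖p - m‖ ^ 2 ≤ α p ∧ α p ≤ α m + C₂ * ‖p - m‖ ^ 2) :
    ∀ B : Set (EuclideanSpace ℝ (Fin l)), m ∈ B → (∃ O, IsOpen O ∧ B = K ∩ O) →
      Tendsto
        (fun s : ℝ => (∫ p in K \ B, Real.exp (-s * α p)) / ∫ p in K, Real.exp (-s * α p))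
        atTop (nhds 0) :=
  stmt5_general l K hK m hm α hα C₁ C₂ hC₁ hbound
end

section
/- Under the assumptions of the previous statement, for any continuous function φ : K → ℝ, lim_{s→∞} ∫_K φ(p) ρ_s(p) dp = φ(m); that is, e^{−sα}/‖e^{−sα}‖_{L¹(K)} converges weakly to the Dirac delta at m. -/
/-! Laplace's principle. On `s \ u`, for a neighbourhood `u` of the strict minimiser `x₀`,
compactness gives `c ≥ b` with `b > c x₀`; pick `c x₀ < b' < b`. The total mass
`∫_s exp (-t c)` is at least `exp (-t b')` times the measure of a neighbourhood of `x₀` on which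
`c < b'`, so the normalised density `exp (-t c) / ∫_s exp (-t c)` is `O(exp (-t (b - b')))`
uniformly on `s \ u`. These densities are therefore peak functions at `x₀`, and integrating a
function continuous at `x₀` against them converges to its value there. In the theorem, the
quadratic lower bound makes `m` the strict minimiser of `α` on `K`, and Lebesgue measure charges
every neighbourhood of an interior point. -/

open MeasureTheory Filter Set Topology

section LaplacePeak

variable {X E : Type*} [MeasurableSpace X] {μ : Measure X} {s : Set X} {c : X → ℝ}

variable (μ s c) in
/-- The paper's `ρ_s`, with the set `K` renamed `s` and the parameter `s` renamed `t`. -/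
noncomputable def gibbsDensity (t : ℝ) (x : X) : ℝ :=
  (∫ y in s, Real.exp (-t * c y) ∂μ)⁻¹ * Real.exp (-t * c x)

lemma gibbsDensity_nonneg (t : ℝ) (x : X) : 0 ≤ gibbsDensity μ s c t x :=
  mul_nonneg (inv_nonneg.2 (integral_nonneg fun _ ↦ (Real.exp_pos _).le)) (Real.exp_pos _).le

lemma setIntegral_gibbsDensity {t : ℝ} (ht : 0 < ∫ y in s, Real.exp (-t * c y) ∂μ) :
    ∫ x in s, gibbsDensity μ s c t x ∂μ = 1 := by
  simp only [gibbsDensity]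
  rw [integral_const_mul, inv_mul_cancel₀ ht.ne']

variable [TopologicalSpace X] [T2Space X] [BorelSpace X] [IsFiniteMeasureOnCompacts μ] {x₀ : X}

lemma exp_mul_measureReal_le_setIntegral_exp_neg_mul (hs : IsCompact s) (hc : ContinuousOn c s)
    {v : Set X} (hv : MeasurableSet v) (hvs : v ⊆ s) {b : ℝ} (hcb : ∀ x ∈ v, c x ≤ b) {t : ℝ}
    (ht : 0 ≤ t) :
    Real.exp (-t * b) * μ.real v ≤ ∫ x in s, Real.exp (-t * c x) ∂μ := by
  have hint : IntegrableOn (fun x ↦ Real.exp (-t * c x)) s μ :=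
    ((continuousOn_const.mul hc).rexp).integrableOn_compact hs
  calc Real.exp (-t * b) * μ.real v
      ≤ ∫ x in v, Real.exp (-t * c x) ∂μ :=
        setIntegral_ge_of_const_le_real hv
          ((measure_mono hvs).trans_lt hs.measure_lt_top).ne
          (fun x hx ↦ Real.exp_le_exp.2 (by nlinarith [hcb x hx])) (hint.mono_set hvs)
    _ ≤ ∫ x in s, Real.exp (-t * c x) ∂μ :=
        setIntegral_mono_set hint (.of_forall fun _ ↦ (Real.exp_pos _).le) (.of_forall hvs)

lemma exists_exp_mul_le_setIntegral_exp_neg_mul (hs : IsCompact s)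
    (hμ : ∀ u, IsOpen u → x₀ ∈ u → 0 < μ (u ∩ s)) (hc : ContinuousOn c s) (h₀ : x₀ ∈ s) {b : ℝ}
    (hb : c x₀ < b) :
    ∃ V > 0, ∀ t ≥ 0, Real.exp (-t * b) * V ≤ ∫ x in s, Real.exp (-t * c x) ∂μ := by
  obtain ⟨v, hv, hx₀v, hvc⟩ := continuousOn_iff.1 hc x₀ h₀ (Iio b) isOpen_Iio hb
  refine ⟨μ.real (v ∩ s), ENNReal.toReal_pos (hμ v hv hx₀v).ne'
    ((measure_mono inter_subset_right).trans_lt hs.measure_lt_top).ne, fun t ht ↦ ?_⟩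
  exact exp_mul_measureReal_le_setIntegral_exp_neg_mul hs hc
    (hv.measurableSet.inter hs.measurableSet) inter_subset_right (fun x hx ↦ (hvc hx).le) ht

lemma setIntegral_exp_neg_mul_pos (hs : IsCompact s)
    (hμ : ∀ u, IsOpen u → x₀ ∈ u → 0 < μ (u ∩ s)) (hc : ContinuousOn c s) (h₀ : x₀ ∈ s) {t : ℝ}
    (ht : 0 ≤ t) : 0 < ∫ x in s, Real.exp (-t * c x) ∂μ := by
  obtain ⟨V, hV, hle⟩ :=
    exists_exp_mul_le_setIntegral_exp_neg_mul hs hμ hc h₀ (lt_add_one (c x₀))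
  exact (mul_pos (Real.exp_pos _) hV).trans_le (hle t ht)

lemma tendstoUniformlyOn_gibbsDensity (hs : IsCompact s)
    (hμ : ∀ u, IsOpen u → x₀ ∈ u → 0 < μ (u ∩ s)) (hc : ContinuousOn c s) (h₀ : x₀ ∈ s)
    (hmin : ∀ y ∈ s, y ≠ x₀ → c x₀ < c y) {u : Set X} (hu : IsOpen u) (hx₀u : x₀ ∈ u) :
    TendstoUniformlyOn (gibbsDensity μ s c) 0 atTop (s \ u) := by
  obtain ⟨b, hb, hbc⟩ := (hs.diff hu).exists_forall_le' (hc.mono sdiff_subset)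
    fun y hy ↦ hmin y hy.1 (ne_of_mem_of_not_mem hx₀u hy.2 |>.symm)
  obtain ⟨b', hb'₀, hb'b⟩ := exists_between hb
  obtain ⟨V, hV, hle⟩ := exists_exp_mul_le_setIntegral_exp_neg_mul hs hμ hc h₀ hb'₀
  have hbound : ∀ t ≥ 0, ∀ x ∈ s \ u,
      gibbsDensity μ s c t x ≤ V⁻¹ * Real.exp (-t * (b - b')) := by
    intro t ht x hx
    have hexp : Real.exp (-t * c x) ≤ Real.exp (-t * b) :=
      Real.exp_le_exp.2 (by nlinarith [hbc x hx])
    calc gibbsDensity μ s c t x ≤ (Real.exp (-t * b') * V)⁻¹ * Real.exp (-t * b) := by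
          unfold gibbsDensity; gcongr; exact hle t ht
      _ = V⁻¹ * Real.exp (-t * (b - b')) := by
          rw [show -t * (b - b') = -t * b - -t * b' by ring, Real.exp_sub]; field_simp
  have hdecay : Tendsto (fun t ↦ V⁻¹ * Real.exp (-t * (b - b'))) atTop (𝓝 0) := by
    have h := (Real.tendsto_exp_atBot.comp
      (tendsto_neg_atTop_atBot.atBot_mul_const (sub_pos.2 hb'b))).const_mul V⁻¹
    simpa using h
  refine Metric.tendstoUniformlyOn_iff.2 fun ε hε ↦ ?_
  filter_upwards [(tendsto_order.1 hdecay).2 ε hε, eventually_ge_atTop 0] with t hεt ht x hx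
  rw [Pi.zero_apply, dist_zero_left, Real.norm_of_nonneg (gibbsDensity_nonneg t x)]
  exact (hbound t ht x hx).trans_lt hεt

theorem tendsto_setIntegral_gibbsDensity_smul [NormedAddCommGroup E] [NormedSpace ℝ E]
    [CompleteSpace E] {g : X → E} (hs : IsCompact s)
    (hμ : ∀ u, IsOpen u → x₀ ∈ u → 0 < μ (u ∩ s)) (hc : ContinuousOn c s) (h₀ : x₀ ∈ s)
    (hmin : ∀ y ∈ s, y ≠ x₀ → c x₀ < c y) (hg : IntegrableOn g s μ)
    (hgx₀ : ContinuousWithinAt g s x₀) :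
    Tendsto (fun t ↦ ∫ x in s, gibbsDensity μ s c t x • g x ∂μ) atTop (𝓝 (g x₀)) := by
  have hmass : Tendsto (fun t ↦ ∫ x in s, gibbsDensity μ s c t x ∂μ) atTop (𝓝 1) := by
    refine tendsto_const_nhds.congr' ?_
    filter_upwards [eventually_ge_atTop 0] with t ht
    exact (setIntegral_gibbsDensity (setIntegral_exp_neg_mul_pos hs hμ hc h₀ ht)).symm
  have hmeas : ∀ t, AEStronglyMeasurable (gibbsDensity μ s c t) (μ.restrict s) := fun t ↦
    (continuousOn_const.mul (continuousOn_const.mul hc).rexp).aestronglyMeasurable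
      hs.measurableSet
  exact tendsto_setIntegral_peak_smul_of_integrableOn_of_tendsto hs.measurableSet
    hs.measurableSet Subset.rfl self_mem_nhdsWithin hs.measure_lt_top.ne
    (.of_forall fun t x _ ↦ gibbsDensity_nonneg t x)
    (fun _ hu hx₀u ↦ tendstoUniformlyOn_gibbsDensity hs hμ hc h₀ hmin hu hx₀u) hmass
    (.of_forall hmeas) hg hgx₀

end LaplacePeak

theorem stmt6_general (l : ℕ) (K : Set (EuclideanSpace ℝ (Fin l))) (hK : IsCompact K)
    (m : EuclideanSpace ℝ (Fin l)) (hm : m ∈ interior K)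
    (α : EuclideanSpace ℝ (Fin l) → ℝ) (hα : ContinuousOn α K)
    (C₁ C₂ : ℝ) (hC₁ : 0 < C₁)
    (hbound : ∀ p ∈ K, α m + C₁ * ‖p - m‖ ^ 2 ≤ α p ∧ α p ≤ α m + C₂ * ‖p - m‖ ^ 2) :
    ∀ φ : EuclideanSpace ℝ (Fin l) → ℝ, ContinuousOn φ K →
      Tendsto
        (fun s : ℝ => (∫ p in K, φ p * Real.exp (-s * α p)) / ∫ p in K, Real.exp (-s * α p))
        atTop (nhds (φ m)) := by
  intro φ hφ
  have hmK : m ∈ K := interior_subset hm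
  have hmass : ∀ u, IsOpen u → m ∈ u → 0 < volume (u ∩ K) := fun u hu hmu ↦
    ((hu.inter isOpen_interior).measure_pos volume ⟨m, hmu, hm⟩).trans_le
      (measure_mono (inter_subset_inter_right u interior_subset))
  have hmin : ∀ p ∈ K, p ≠ m → α m < α p := fun p hp hpm ↦ by
    have hgap : 0 < C₁ * ‖p - m‖ ^ 2 :=
      mul_pos hC₁ (pow_pos (norm_pos_iff.2 (sub_ne_zero.2 hpm)) 2)
    linarith [(hbound p hp).1]
  convert tendsto_setIntegral_gibbsDensity_smul hK hmass hα hmK hmin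
    (hφ.integrableOn_compact hK) (hφ m hmK) using 2 with s
  simp only [gibbsDensity, smul_eq_mul, mul_assoc, integral_const_mul]
  rw [inv_mul_eq_div]
  simp only [mul_comm]

/-- Under the quadratic concentration assumptions, `e^{-sα}/‖e^{-sα}‖_{L¹(K)}`
converges weakly to the Dirac delta at `m`: for any continuous `φ` on `K`,
`∫_K φ ρ_s → φ(m)` as `s → ∞`. -/
theorem stmt6 (l : ℕ) (K : Set (EuclideanSpace ℝ (Fin l))) (hK : IsCompact K)
    (m : EuclideanSpace ℝ (Fin l)) (hm : m ∈ interior K)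
    (α : EuclideanSpace ℝ (Fin l) → ℝ) (hα : ContinuousOn α K)
    (C₁ C₂ : ℝ) (hC₁ : 0 < C₁) (hC₂ : 0 < C₂)
    (hbound : ∀ p ∈ K, α m + C₁ * ‖p - m‖ ^ 2 ≤ α p ∧ α p ≤ α m + C₂ * ‖p - m‖ ^ 2) :
    ∀ φ : EuclideanSpace ℝ (Fin l) → ℝ, ContinuousOn φ K →
      Tendsto
        (fun s : ℝ => (∫ p in K, φ p * Real.exp (-s * α p)) / ∫ p in K, Real.exp (-s * α p))
        atTop (nhds (φ m)) :=
  stmt6_general l K hK m hm α hα C₁ C₂ hC₁ hbound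
end

section
/- Let α : K → ℝ satisfy α(p) ≥ α(m) + C₁‖p−m‖² on a compact set K ⊂ ℝˡ with m ∈ Int K, and suppose ∫_{B_r(m)∩K} e^{−sα(p)} dp ≥ C₃ rˡ e^{−sα(m) − sC₂r²} for small r > 0. Then for any r > 0 with C₁ δ² > C₂ r² where δ = dist of p to m, the normalized density satisfies the pointwise bound e^{−sα(p)} / ∫_K e^{−sα} ≤ C₅ r^{−l} e^{−s(C₁‖p−m‖² − C₂ r²)} for some constant C₅ > 0 independent of s; in particular it tends to 0 uniformly on K ∖ B, for any open neighborhood B of m, as s → ∞. -/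
open MeasureTheory Filter

/-- Pointwise Laplace bound: if `α(p) ≥ α(m) + C₁‖p-m‖²` on compact `K` with
`m ∈ Int K`, and the lower bound `∫_{B_r(m)∩K} e^{-sα} ≥ C₃ rˡ e^{-sα(m) - sC₂r²}`
holds for small `r`, then for any such `r > 0` the normalized density satisfies
`e^{-sα(p)}/∫_K e^{-sα} ≤ (C₅/rˡ) e^{-s(C₁‖p-m‖² - C₂r²)}` with `C₅` independent
of `s`; in particular it tends to `0` uniformly on `K ∖ B` for any open
neighborhood `B` of `m` as `s → ∞`. -/
theorem stmt7 (l : ℕ) (K : Set (EuclideanSpace ℝ (Fin l))) (hK : IsCompact K)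
    (m : EuclideanSpace ℝ (Fin l)) (hm : m ∈ interior K)
    (α : EuclideanSpace ℝ (Fin l) → ℝ) (hαc : ContinuousOn α K)
    (C₁ C₂ C₃ : ℝ) (h1 : 0 < C₁) (h2 : 0 < C₂) (h3 : 0 < C₃)
    (hα : ∀ p ∈ K, α m + C₁ * ‖p - m‖ ^ 2 ≤ α p)
    (r₀ : ℝ) (hr₀ : 0 < r₀)
    (hint : ∀ r, 0 < r → r ≤ r₀ → ∀ s : ℝ, 0 ≤ s →
      C₃ * r ^ l * Real.exp (-s * α m - s * C₂ * r ^ 2) ≤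
        ∫ p in Metric.ball m r ∩ K, Real.exp (-s * α p)) :
    (∀ r, 0 < r → r ≤ r₀ → ∃ C₅ > 0, ∀ s : ℝ, 0 ≤ s → ∀ p ∈ K,
      Real.exp (-s * α p) / ∫ q in K, Real.exp (-s * α q) ≤
        (C₅ / r ^ l) * Real.exp (-s * (C₁ * ‖p - m‖ ^ 2 - C₂ * r ^ 2))) ∧
    ∀ B : Set (EuclideanSpace ℝ (Fin l)), IsOpen B → m ∈ B →
      ∀ ε > 0, ∃ s₀ : ℝ, ∀ s ≥ s₀, ∀ p ∈ K \ B,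
        Real.exp (-s * α p) / ∫ q in K, Real.exp (-s * α q) ≤ ε := by
  have key : ∀ r, 0 < r → r ≤ r₀ → ∀ s : ℝ, 0 ≤ s → ∀ p ∈ K,
      Real.exp (-s * α p) / ∫ q in K, Real.exp (-s * α q) ≤
        ((1/C₃) / r ^ l) * Real.exp (-s * (C₁ * ‖p - m‖ ^ 2 - C₂ * r ^ 2)) := by
    intro r hr hrr s hs p hp
    have hrl : (0:ℝ) < r ^ l := pow_pos hr l
    have hInt : IntegrableOn (fun q => Real.exp (-s * α q)) K := by
      apply ContinuousOn.integrableOn_compact hK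
      exact Real.continuous_exp.comp_continuousOn (continuousOn_const.mul hαc)
    have hD : C₃ * r ^ l * Real.exp (-s * α m - s * C₂ * r ^ 2) ≤
        ∫ q in K, Real.exp (-s * α q) := by
      refine le_trans (hint r hr hrr s hs) ?_
      refine setIntegral_mono_set hInt ?_ ?_
      · exact Filter.Eventually.of_forall fun q => (Real.exp_pos _).le
      · exact (Set.inter_subset_right).eventuallyLE
    have hIpos : 0 < ∫ q in K, Real.exp (-s * α q) :=
      lt_of_lt_of_le (by positivity) hD
    rw [div_le_iff₀ hIpos]
    have hc3 : C₃ ≠ 0 := ne_of_gt h3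
    have hrl' : (r:ℝ) ^ l ≠ 0 := ne_of_gt hrl
    calc Real.exp (-s * α p)
        ≤ Real.exp (-s * (α m + C₁ * ‖p - m‖ ^ 2)) := by
          apply Real.exp_le_exp.mpr
          have := hα p hp
          nlinarith
      _ = ((1/C₃) / r ^ l) * Real.exp (-s * (C₁ * ‖p - m‖ ^ 2 - C₂ * r ^ 2)) *
          (C₃ * r ^ l * Real.exp (-s * α m - s * C₂ * r ^ 2)) := by
          rw [show (-s * (α m + C₁ * ‖p - m‖ ^ 2)) =
            (-s * (C₁ * ‖p - m‖ ^ 2 - C₂ * r ^ 2)) + (-s * α m - s * C₂ * r ^ 2) by ring,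
            Real.exp_add]
          field_simp
      _ ≤ _ := mul_le_mul_of_nonneg_left hD (by positivity)
  refine ⟨fun r hr hrr => ⟨1/C₃, by positivity, key r hr hrr⟩, ?_⟩
  intro B hB hmB ε hε
  obtain ⟨δ, hδ, hball⟩ := Metric.isOpen_iff.mp hB m hmB
  set r := min r₀ (Real.sqrt (C₁ * δ ^ 2 / (2 * C₂))) with hrdef
  have hargpos : 0 < C₁ * δ ^ 2 / (2 * C₂) := by positivity
  have hr : 0 < r := lt_min hr₀ (Real.sqrt_pos.mpr hargpos)
  have hrr : r ≤ r₀ := min_le_left _ _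
  have hr2 : C₂ * r ^ 2 ≤ C₁ * δ ^ 2 / 2 := by
    have h1' : r ^ 2 ≤ (Real.sqrt (C₁ * δ ^ 2 / (2 * C₂))) ^ 2 :=
      pow_le_pow_left₀ hr.le (min_le_right _ _) 2
    rw [Real.sq_sqrt hargpos.le] at h1'
    calc C₂ * r ^ 2 ≤ C₂ * (C₁ * δ ^ 2 / (2 * C₂)) := by nlinarith
      _ = C₁ * δ ^ 2 / 2 := by field_simp
  set c := C₁ * δ ^ 2 - C₂ * r ^ 2 with hcdef
  have hcpos : 0 < c := by nlinarith [mul_pos hδ hδ, sq_nonneg δ]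
  set A := (1/C₃) / r ^ l with hAdef
  have hApos : 0 < A := by positivity
  have ht : Tendsto (fun s : ℝ => A * Real.exp (-s * c)) atTop (nhds 0) := by
    have h2' : Tendsto (fun s : ℝ => -s * c) atTop atBot := by
      have := (tendsto_const_mul_atBot_of_neg (neg_lt_zero.mpr hcpos)).mpr
        (tendsto_id (α := ℝ))
      simpa [neg_mul, mul_comm] using this
    have h3' := Real.tendsto_exp_atBot.comp h2'
    simpa using h3'.const_mul A
  have hev : ∀ᶠ s : ℝ in atTop, A * Real.exp (-s * c) < ε ∧ (0:ℝ) ≤ s :=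
    (ht.eventually_lt_const hε).and (eventually_ge_atTop 0)
  obtain ⟨s₀, hs₀⟩ := eventually_atTop.mp hev
  refine ⟨s₀, fun s hs p hp => ?_⟩
  obtain ⟨hlt, hs0⟩ := hs₀ s hs
  have hd : δ ≤ ‖p - m‖ := by
    by_contra hcon
    push_neg at hcon
    exact hp.2 (hball (by simpa [Metric.mem_ball, dist_eq_norm] using hcon))
  calc Real.exp (-s * α p) / ∫ q in K, Real.exp (-s * α q)
      ≤ A * Real.exp (-s * (C₁ * ‖p - m‖ ^ 2 - C₂ * r ^ 2)) :=
        key r hr hrr s hs0 p hp.1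
    _ ≤ A * Real.exp (-s * c) := by
        apply mul_le_mul_of_nonneg_left _ hApos.le
        apply Real.exp_le_exp.mpr
        have hnn : 0 ≤ ‖p - m‖ := norm_nonneg _
        nlinarith [mul_le_mul hd hd hδ.le hnn,
          mul_le_mul_of_nonneg_left (mul_le_mul hd hd hδ.le hnn)
            (mul_nonneg hs0 h1.le)]
    _ ≤ ε := hlt.le
end
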